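/- arXiv:1711.06901 — 3 statements merged into one kernel-verified Lean document; each statement's English description precedes it below -/
import Mathlib

section
/- Let F be an entire function such that for every A > 0 there is a constant C(A) with |F(z)| ≤ C(A)·exp(π|z|²/2 − A|z|) for all z ∈ ℂ. Then the closure in 𝓕 of the linear span of {e_λ·F : λ ∈ ℂ} equals [F]_𝓕. -/
open MeasureTheory Complex Filter Metric Set

noncomputable section

/-- Squared norm in the Fock space `𝓕`. -/
def fockNormSq (f : ℂ → ℂ) : ENNReal :=
  ∫⁻ z : ℂ, ENNReal.ofReal (‖f z‖ ^ 2 * Real.exp (-Real.pi * ‖z‖ ^ 2))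

/-- Membership in the Fock space `𝓕`. -/
def MemFock (f : ℂ → ℂ) : Prop :=
  Differentiable ℂ f ∧ fockNormSq f < ⊤

/-- Membership in the Fock space `𝓕_(α)`. -/
def MemFockA (α : ℝ) (f : ℂ → ℂ) : Prop :=
  Differentiable ℂ f ∧
    (∫⁻ z : ℂ, ENNReal.ofReal (‖f z‖ ^ 2 * Real.exp (-(α * Real.pi) * ‖z‖ ^ 2))) < ⊤

/-- The Fock space inner product `⟨f, g⟩`. -/
def fockInner (f g : ℂ → ℂ) : ℂ :=
  ∫ z : ℂ, f z * (starRingEnd ℂ) (g z) * (Real.exp (-Real.pi * ‖z‖ ^ 2) : ℝ)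

/-- Membership in `𝓕₀ = {F entire : pF ∈ 𝓕 for every polynomial p}`. -/
def MemFock0 (f : ℂ → ℂ) : Prop :=
  Differentiable ℂ f ∧ ∀ p : Polynomial ℂ, MemFock fun z => p.eval z * f z

/-- `H` belongs to `[F]_𝓕`, the closure in `𝓕` of the polynomial multiples of `F`. -/
def InPolyClosure (F H : ℂ → ℂ) : Prop :=
  MemFock H ∧ ∀ ε : ℝ, 0 < ε → ∃ p : Polynomial ℂ,
    fockNormSq (fun z => p.eval z * F z - H z) < ENNReal.ofReal (ε ^ 2)

/-- `H` belongs to the closure in `𝓕` of the span of `{e_λ F : λ ∈ ℂ}`. -/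
def InExpClosure (F H : ℂ → ℂ) : Prop :=
  MemFock H ∧ ∀ ε : ℝ, 0 < ε → ∃ (n : ℕ) (c lam : Fin n → ℂ),
    fockNormSq (fun z => (∑ i : Fin n, c i * Complex.exp (lam i * z)) * F z - H z)
      < ENNReal.ofReal (ε ^ 2)

/-- The class `𝓔_{2,α}` of entire functions of type at most `α` for order `2`. -/
def MemE2 (α : ℝ) (F : ℂ → ℂ) : Prop :=
  Differentiable ℂ F ∧
    Filter.limsup (fun z : ℂ => Real.log ‖F z‖ / ‖z‖ ^ 2) (Bornology.cobounded ℂ) ≤ α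

/-- The class `𝓔₂ = ∪_{α<∞} 𝓔_{2,α}`. -/
def MemE2' (F : ℂ → ℂ) : Prop := ∃ α : ℝ, MemE2 α F

/-- The indicator function of `F` for order `2`. -/
def indicator2 (F : ℂ → ℂ) (θ : ℝ) : ℝ :=
  Filter.limsup
    (fun r : ℝ => Real.log ‖F ((r : ℂ) * Complex.exp ((θ : ℂ) * Complex.I))‖ / r ^ 2)
    Filter.atTop

/-- Completely regular growth for order `2`. -/
def CRG (F : ℂ → ℂ) : Prop :=
  ∃ E : Set ℝ, MeasurableSet E ∧ E ⊆ Set.Ici (0 : ℝ) ∧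
    Filter.Tendsto (fun R : ℝ => (volume (E ∩ Set.Icc 0 R)).toReal / R)
      Filter.atTop (nhds 0) ∧
    ∀ ε : ℝ, 0 < ε → ∃ R₀ : ℝ, ∀ r : ℝ, R₀ ≤ r → r ∉ E →
      ∀ θ ∈ Set.Icc (0 : ℝ) (2 * Real.pi),
        |Real.log ‖F ((r : ℂ) * Complex.exp ((θ : ℂ) * Complex.I))‖ / r ^ 2
          - indicator2 F θ| < ε

/-- The maximum modulus of `h` on the circle of radius `r`. -/
def maxModulus (h : ℂ → ℂ) (r : ℝ) : ℝ :=
  sSup ((fun z => ‖h z‖) '' Metric.sphere (0 : ℂ) r)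

/-- `h` has order at most `α`. -/
def OrderAtMost (h : ℂ → ℂ) (α : ℝ) : Prop :=
  Filter.limsup (fun r : ℝ => Real.log (Real.log (maxModulus h r)) / Real.log r)
    Filter.atTop ≤ α

/-- The lattice `𝒵 = ℤ + iℤ`. -/
def latticeZ : Set ℂ := {z : ℂ | ∃ m n : ℤ, z = (m : ℂ) + (n : ℂ) * Complex.I}

/-- `𝒵₀ = 𝒵 ∖ {0}`. -/
def latticeZ0 : Set ℂ := latticeZ \ {0}

/-- `σ₀(z) = σ(z)/z` where `σ` is the Weierstrass sigma function of the lattice `𝒵`. -/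
def sigma0 (z : ℂ) : ℂ :=
  ∏' w : latticeZ0,
    (1 - z / (w : ℂ)) * Complex.exp (z / (w : ℂ) + z ^ 2 / (2 * (w : ℂ) ^ 2))

/-- The Weierstrass sigma function of the lattice `𝒵`. -/
def weierstrassSigma (z : ℂ) : ℂ := z * sigma0 z

/-- Thin subsets of `ℂ`. -/
def IsThin (Ω : Set ℂ) : Prop :=
  ∃ Ω₁ Ω₂ : Set ℂ, MeasurableSet Ω₁ ∧ MeasurableSet Ω₂ ∧ Ω = Ω₁ ∪ Ω₂ ∧
    Filter.Tendsto (fun R : ℝ => (volume (Ω₁ ∩ Metric.ball (0 : ℂ) R)).toReal / R ^ 2)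
      Filter.atTop (nhds 0) ∧
    (∫⁻ z in Ω₂, ENNReal.ofReal (1 / ((‖z‖ + 1) ^ 2 * Real.log (‖z‖ + 2)))) < ⊤

/-- Lattice thin subsets of `𝒵`. -/
def LatticeThin (A : Set ℂ) : Prop :=
  A ⊆ latticeZ ∧ ∀ c : ℝ, 0 < c → IsThin (⋃ w ∈ A, Metric.ball w c)

/-- The function `𝓘(F₁, F₂)`. -/
def calI (F₁ F₂ : ℂ → ℂ) (z : ℂ) : ℂ :=
  (∫ ζ : ℂ, F₂ ζ * (starRingEnd ℂ) (F₁ ζ) / (z - ζ) * (Real.exp (-Real.pi * ‖ζ‖ ^ 2) : ℝ)) -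
  F₂ z / sigma0 z *
    ∫ ζ : ℂ, sigma0 ζ * (starRingEnd ℂ) (F₁ ζ) / (z - ζ) * (Real.exp (-Real.pi * ‖ζ‖ ^ 2) : ℝ)

end

/-!
If `gₙ → g` pointwise with a common bound `|gₙ(z)| ≤ K e^{L|z|}`, then `gₙ F → g F` in `𝓕`:
the growth hypothesis on `F` gives an integrable majorant of `|gₙ - g|² |F|² e^{-π|z|²}`, and
dominated convergence applies. Such limits of a subalgebra form a subalgebra. The Taylor
polynomials of `e_λ` show that every exponential sum is such a limit of polynomials, and the
exponential sums `m (e^{z/m} - 1) → z` show that every polynomial is such a limit of exponential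
sums; hence each of `{e_λ F}` and `{p F}` lies in the closure of the span of the other.
-/

open scoped Topology

theorem integrable_exp_neg_mul_norm {E : Type*} [NormedAddCommGroup E] [NormedSpace ℝ E]
    [FiniteDimensional ℝ E] [MeasurableSpace E] [BorelSpace E] (μ : Measure E)
    [μ.IsAddHaarMeasure] {c : ℝ} (hc : (Module.finrank ℝ E : ℝ) < c) :
    Integrable (fun x => Real.exp (-(c * ‖x‖))) μ := by
  have hc0 : 0 ≤ c := (Nat.cast_nonneg _).trans hc.le
  refine (integrable_one_add_norm hc).mono' (by fun_prop) (Eventually.of_forall fun x => ?_)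
  rw [Real.norm_of_nonneg (Real.exp_pos _).le, Real.exp_neg, Real.rpow_neg (by positivity),
    mul_comm, Real.exp_mul]
  gcongr
  linarith [Real.add_one_le_exp ‖x‖]

theorem fockNormSq_add_le {a b : ℂ → ℂ} (ha : Measurable a) :
    fockNormSq (fun z => a z + b z) ≤ 2 * fockNormSq a + 2 * fockNormSq b := by
  have hpt (z : ℂ) : ENNReal.ofReal (‖a z + b z‖ ^ 2 * Real.exp (-Real.pi * ‖z‖ ^ 2)) ≤
      2 * ENNReal.ofReal (‖a z‖ ^ 2 * Real.exp (-Real.pi * ‖z‖ ^ 2)) +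
        2 * ENNReal.ofReal (‖b z‖ ^ 2 * Real.exp (-Real.pi * ‖z‖ ^ 2)) := by
    have hsq : ‖a z + b z‖ ^ 2 ≤ 2 * ‖a z‖ ^ 2 + 2 * ‖b z‖ ^ 2 := by
      nlinarith [norm_add_le (a z) (b z), norm_nonneg (a z + b z), sq_nonneg (‖a z‖ - ‖b z‖)]
    rw [← ENNReal.ofReal_ofNat 2, ← ENNReal.ofReal_mul zero_le_two,
      ← ENNReal.ofReal_mul zero_le_two, ← ENNReal.ofReal_add (by positivity) (by positivity)]
    gcongr
    nlinarith [Real.exp_pos (-Real.pi * ‖z‖ ^ 2)]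
  calc fockNormSq (fun z => a z + b z)
      ≤ ∫⁻ z, (2 * ENNReal.ofReal (‖a z‖ ^ 2 * Real.exp (-Real.pi * ‖z‖ ^ 2)) +
          2 * ENNReal.ofReal (‖b z‖ ^ 2 * Real.exp (-Real.pi * ‖z‖ ^ 2))) := lintegral_mono hpt
    _ = 2 * fockNormSq a + 2 * fockNormSq b := by
      rw [lintegral_add_left (by fun_prop), lintegral_const_mul' _ _ (by simp),
        lintegral_const_mul' _ _ (by simp)]
      rfl

theorem sq_mul_mul_exp_neg_le {t x y K C L : ℝ} (ht : 0 ≤ t) (hx0 : 0 ≤ x)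
    (hx : x ≤ K * Real.exp (L * t)) (hy0 : 0 ≤ y)
    (hy : y ≤ C * Real.exp (Real.pi * t ^ 2 / 2 - (|L| + 2) * t)) :
    (x * y) ^ 2 * Real.exp (-Real.pi * t ^ 2) ≤ (K * C) ^ 2 * Real.exp (-(4 * t)) := by
  calc (x * y) ^ 2 * Real.exp (-Real.pi * t ^ 2)
      ≤ (K * Real.exp (L * t) * (C * Real.exp (Real.pi * t ^ 2 / 2 - (|L| + 2) * t))) ^ 2 *
          Real.exp (-Real.pi * t ^ 2) := by gcongr; exact hx0.trans hx
    _ = (K * C) ^ 2 * Real.exp (2 * (L - |L|) * t - 4 * t) := by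
      rw [mul_mul_mul_comm, mul_pow, mul_assoc, ← Real.exp_add, ← Real.exp_nat_mul,
        ← Real.exp_add]
      ring_nf
    _ ≤ (K * C) ^ 2 * Real.exp (-(4 * t)) := by
      gcongr
      nlinarith [le_abs_self L]

theorem tendsto_fockNormSq_mul_sub_mul {F : ℂ → ℂ} (hF : Measurable F)
    (hgrowth : ∀ A : ℝ, 0 < A → ∃ C : ℝ, ∀ z : ℂ,
      ‖F z‖ ≤ C * Real.exp (Real.pi * ‖z‖ ^ 2 / 2 - A * ‖z‖))
    {u : ℕ → ℂ → ℂ} {g : ℂ → ℂ} (hu : ∀ n, Measurable (u n)) (hg : Measurable g) {K L : ℝ}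
    (hbound : ∀ n z, ‖u n z‖ ≤ K * Real.exp (L * ‖z‖))
    (hlim : ∀ z, Tendsto (fun n => u n z) atTop (𝓝 (g z))) :
    Tendsto (fun n => fockNormSq fun z => u n z * F z - g z * F z) atTop (𝓝 0) := by
  -- With `A = |L| + 2` the Gaussian weight cancels and leaves the integrable majorant `e^{-4|z|}`.
  obtain ⟨C, hC⟩ := hgrowth (|L| + 2) (by positivity)
  have hg_bound (z : ℂ) : ‖g z‖ ≤ K * Real.exp (L * ‖z‖) :=
    le_of_tendsto' (hlim z).norm fun n => hbound n z
  have hdom (n : ℕ) (z : ℂ) :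
      ‖u n z * F z - g z * F z‖ ^ 2 * Real.exp (-Real.pi * ‖z‖ ^ 2) ≤
        (2 * K * C) ^ 2 * Real.exp (-(4 * ‖z‖)) := by
    rw [← sub_mul, norm_mul]
    refine sq_mul_mul_exp_neg_le (norm_nonneg z) (norm_nonneg _) ?_ (norm_nonneg _) (hC z)
    linarith [norm_sub_le (u n z) (g z), hbound n z, hg_bound z]
  have hlim' (z : ℂ) : Tendsto (fun n => ENNReal.ofReal
      (‖u n z * F z - g z * F z‖ ^ 2 * Real.exp (-Real.pi * ‖z‖ ^ 2))) atTop (𝓝 0) := by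
    have h := ((((hlim z).mul_const (F z)).sub_const (g z * F z)).norm.pow 2).mul_const
      (Real.exp (-Real.pi * ‖z‖ ^ 2))
    simpa using ENNReal.tendsto_ofReal h
  have hint := ((integrable_exp_neg_mul_norm (volume : Measure ℂ) (c := 4)
    (by norm_num [Complex.finrank_real_complex])).const_mul ((2 * K * C) ^ 2)).lintegral_lt_top
  have h := tendsto_lintegral_of_dominated_convergence _
    (fun n => by fun_prop)
    (fun n => Eventually.of_forall fun z => ENNReal.ofReal_le_ofReal (hdom n z))
    hint.ne (Eventually.of_forall hlim')
  rwa [lintegral_zero] at h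

def expTypeLimits (B : Subalgebra ℂ (ℂ → ℂ)) : Subalgebra ℂ (ℂ → ℂ) where
  carrier := {g | ∃ (u : ℕ → ℂ → ℂ) (K L : ℝ), (∀ n, u n ∈ B) ∧
    (∀ n z, ‖u n z‖ ≤ K * Real.exp (L * ‖z‖)) ∧ ∀ z, Tendsto (fun n => u n z) atTop (𝓝 (g z))}
  add_mem' := by
    rintro f g ⟨u, K, L, huB, hu, hf⟩ ⟨v, K', L', hvB, hv, hg⟩
    refine ⟨u + v, K + K', max L L', fun n => B.add_mem (huB n) (hvB n), fun n z => ?_,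
      fun z => (hf z).add (hg z)⟩
    have hK : 0 ≤ K := by simpa using (norm_nonneg _).trans (hu 0 0)
    have hK' : 0 ≤ K' := by simpa using (norm_nonneg _).trans (hv 0 0)
    calc ‖u n z + v n z‖ ≤ K * Real.exp (L * ‖z‖) + K' * Real.exp (L' * ‖z‖) :=
          (norm_add_le _ _).trans (add_le_add (hu n z) (hv n z))
      _ ≤ K * Real.exp (max L L' * ‖z‖) + K' * Real.exp (max L L' * ‖z‖) := by
          gcongr <;> simp
      _ = (K + K') * Real.exp (max L L' * ‖z‖) := by ring
  mul_mem' := by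
    rintro f g ⟨u, K, L, huB, hu, hf⟩ ⟨v, K', L', hvB, hv, hg⟩
    refine ⟨u * v, K * K', L + L', fun n => B.mul_mem (huB n) (hvB n), fun n z => ?_,
      fun z => (hf z).mul (hg z)⟩
    calc ‖u n z * v n z‖ ≤ K * Real.exp (L * ‖z‖) * (K' * Real.exp (L' * ‖z‖)) :=
          norm_mul_le_of_le (hu n z) (hv n z)
      _ = K * K' * Real.exp ((L + L') * ‖z‖) := by rw [add_mul, Real.exp_add]; ring
  algebraMap_mem' c := ⟨fun _ => algebraMap ℂ _ c, ‖c‖, 0, fun _ => B.algebraMap_mem c,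
    fun _ _ => by simp, fun _ => tendsto_const_nhds⟩

def InFockClosure (A : Set (ℂ → ℂ)) (F H : ℂ → ℂ) : Prop :=
  ∀ ε : ℝ, 0 < ε → ∃ u ∈ A, fockNormSq (fun z => u z * F z - H z) < ENNReal.ofReal (ε ^ 2)

theorem exists_fockNormSq_mul_sub_mul_lt {F : ℂ → ℂ} (hF : Measurable F)
    (hgrowth : ∀ A : ℝ, 0 < A → ∃ C : ℝ, ∀ z : ℂ,
      ‖F z‖ ≤ C * Real.exp (Real.pi * ‖z‖ ^ 2 / 2 - A * ‖z‖))
    {B : Subalgebra ℂ (ℂ → ℂ)} (hB : ∀ v ∈ B, Measurable v) {g : ℂ → ℂ} (hg : Measurable g)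
    (hgB : g ∈ expTypeLimits B) {δ : ENNReal} (hδ : 0 < δ) :
    ∃ v ∈ B, fockNormSq (fun z => v z * F z - g z * F z) < δ := by
  obtain ⟨u, K, L, huB, hu, hlim⟩ := hgB
  obtain ⟨n, hn⟩ := ((tendsto_fockNormSq_mul_sub_mul hF hgrowth (fun n => hB _ (huB n)) hg hu
    hlim).eventually_lt_const hδ).exists
  exact ⟨u n, huB n, hn⟩

theorem InFockClosure.of_subset_expTypeLimits {F H : ℂ → ℂ} (hF : Measurable F)
    (hgrowth : ∀ A : ℝ, 0 < A → ∃ C : ℝ, ∀ z : ℂ,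
      ‖F z‖ ≤ C * Real.exp (Real.pi * ‖z‖ ^ 2 / 2 - A * ‖z‖))
    {A : Set (ℂ → ℂ)} {B : Subalgebra ℂ (ℂ → ℂ)} (hA : ∀ u ∈ A, Measurable u)
    (hB : ∀ v ∈ B, Measurable v) (hAB : A ⊆ expTypeLimits B) (h : InFockClosure A F H) :
    InFockClosure B F H := by
  intro ε hε
  have hε' : 0 < ENNReal.ofReal ((ε / 2) ^ 2) := ENNReal.ofReal_pos.2 (by positivity)
  obtain ⟨u, huA, hu⟩ := h (ε / 2) (by positivity)
  obtain ⟨v, hvB, hv⟩ := exists_fockNormSq_mul_sub_mul_lt hF hgrowth hB (hA u huA) (hAB huA) hε'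
  refine ⟨v, hvB, ?_⟩
  have hvu : Measurable fun z => v z * F z - u z * F z :=
    ((hB v hvB).mul hF).sub ((hA u huA).mul hF)
  calc fockNormSq (fun z => v z * F z - H z)
      = fockNormSq (fun z => (v z * F z - u z * F z) + (u z * F z - H z)) := by
        simp_rw [sub_add_sub_cancel]
    _ ≤ 2 * fockNormSq (fun z => v z * F z - u z * F z) +
          2 * fockNormSq (fun z => u z * F z - H z) := fockNormSq_add_le hvu
    _ < 2 * ENNReal.ofReal ((ε / 2) ^ 2) + 2 * ENNReal.ofReal ((ε / 2) ^ 2) := by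
        gcongr <;> simp
    _ = ENNReal.ofReal (ε ^ 2) := by
        rw [show ε ^ 2 = 4 * (ε / 2) ^ 2 by ring, ENNReal.ofReal_mul zero_le_four,
          ENNReal.ofReal_ofNat]
        ring

noncomputable def expMulHom : Multiplicative ℂ →* (ℂ → ℂ) where
  toFun a z := Complex.exp (a.toAdd * z)
  map_one' := by ext; simp
  map_mul' a b := by ext; simp [add_mul, Complex.exp_add]

def expSums : Subalgebra ℂ (ℂ → ℂ) := Algebra.adjoin ℂ (MonoidHom.mrange expMulHom : Set (ℂ → ℂ))

def polyFunctions : Subalgebra ℂ (ℂ → ℂ) := Algebra.adjoin ℂ {id}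

theorem mem_expSums_iff {u : ℂ → ℂ} : u ∈ expSums ↔
    ∃ (n : ℕ) (c lam : Fin n → ℂ), u = fun z => ∑ i, c i * Complex.exp (lam i * z) := by
  -- The `e_λ` form a multiplicative monoid, so the algebra they generate is their linear span.
  rw [expSums, ← Subalgebra.mem_toSubmodule, Algebra.adjoin_eq_span, Submonoid.closure_eq,
    Submodule.mem_span_set']
  constructor
  · rintro ⟨n, c, e, rfl⟩
    choose lam hlam using fun i => (e i).2
    refine ⟨n, c, fun i => (lam i).toAdd, funext fun z => ?_⟩
    simp [← hlam, expMulHom]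
  · rintro ⟨n, c, lam, rfl⟩
    refine ⟨n, c, fun i => ⟨expMulHom (.ofAdd (lam i)), _, rfl⟩, funext fun z => ?_⟩
    simp [expMulHom]

theorem mem_polyFunctions_iff {u : ℂ → ℂ} :
    u ∈ polyFunctions ↔ ∃ p : Polynomial ℂ, u = fun z => p.eval z := by
  have h (p : Polynomial ℂ) : Polynomial.aeval id p = fun z => p.eval z := funext fun z => by
    simp
  simp [polyFunctions, Algebra.adjoin_singleton_eq_range_aeval, h, eq_comm]

theorem continuous_of_mem_expSums {u : ℂ → ℂ} (hu : u ∈ expSums) : Continuous u := by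
  obtain ⟨n, c, lam, rfl⟩ := mem_expSums_iff.1 hu
  fun_prop

theorem continuous_of_mem_polyFunctions {u : ℂ → ℂ} (hu : u ∈ polyFunctions) : Continuous u := by
  obtain ⟨p, rfl⟩ := mem_polyFunctions_iff.1 hu
  exact p.continuous

theorem exp_mul_mem_expTypeLimits_polyFunctions (a : ℂ) :
    (fun z => Complex.exp (a * z)) ∈ expTypeLimits polyFunctions := by
  refine ⟨fun N z => ∑ k ∈ Finset.range N, (a * z) ^ k / k.factorial, 1, ‖a‖,
    fun N => mem_polyFunctions_iff.2 ⟨∑ k ∈ Finset.range N,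
      Polynomial.C (a ^ k / k.factorial) * Polynomial.X ^ k, ?_⟩, fun N z => ?_, fun z => ?_⟩
  · ext z
    simp [Polynomial.eval_finsetSum, mul_pow, div_mul_eq_mul_div]
  · calc ‖∑ k ∈ Finset.range N, (a * z) ^ k / k.factorial‖
        ≤ ∑ k ∈ Finset.range N, ‖a * z‖ ^ k / k.factorial :=
          (norm_sum_le _ _).trans_eq (by simp)
      _ ≤ 1 * Real.exp (‖a‖ * ‖z‖) := by
          rw [one_mul, ← norm_mul]
          exact Real.sum_le_exp_of_nonneg (norm_nonneg _) N
  · rw [Complex.exp_eq_exp_ℂ]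
    exact (NormedSpace.expSeries_div_hasSum_exp (a * z)).tendsto_sum_nat

theorem id_mem_expTypeLimits_expSums : id ∈ expTypeLimits expSums := by
  refine ⟨fun m z => ((m : ℂ) + 1) * (Complex.exp (((m : ℂ) + 1)⁻¹ * z) - 1), 1, 2,
    fun m => mem_expSums_iff.2 ⟨2, ![(m : ℂ) + 1, -((m : ℂ) + 1)], ![((m : ℂ) + 1)⁻¹, 0], ?_⟩,
    fun m z => ?_, fun z => ?_⟩
  · ext z
    simp only [Fin.sum_univ_two, Matrix.cons_val_zero, Matrix.cons_val_one,
      Matrix.cons_val_fin_one, zero_mul, Complex.exp_zero, mul_one]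
    ring
  · have hm : (1 : ℝ) ≤ ‖(m : ℂ) + 1‖ := by norm_cast; simp
    have hw : ‖((m : ℂ) + 1)⁻¹ * z‖ = ‖(m : ℂ) + 1‖⁻¹ * ‖z‖ := by rw [norm_mul, norm_inv]
    have hexp := Complex.norm_exp_sub_sum_le_norm_mul_exp (((m : ℂ) + 1)⁻¹ * z) 1
    simp only [Finset.sum_range_one, pow_zero, Nat.factorial_zero, Nat.cast_one, div_one,
      pow_one] at hexp
    calc ‖((m : ℂ) + 1) * (Complex.exp (((m : ℂ) + 1)⁻¹ * z) - 1)‖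
        ≤ ‖(m : ℂ) + 1‖ * (‖((m : ℂ) + 1)⁻¹ * z‖ * Real.exp ‖((m : ℂ) + 1)⁻¹ * z‖) := by
          rw [norm_mul]; gcongr
      _ = ‖z‖ * Real.exp (‖(m : ℂ) + 1‖⁻¹ * ‖z‖) := by
          rw [hw, ← mul_assoc, ← mul_assoc, mul_inv_cancel₀ (by positivity), one_mul]
      _ ≤ Real.exp ‖z‖ * Real.exp ‖z‖ := by
          gcongr
          · linarith [Real.add_one_le_exp ‖z‖]
          · exact mul_le_of_le_one_left (norm_nonneg _) (inv_le_one_of_one_le₀ hm)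
      _ = 1 * Real.exp (2 * ‖z‖) := by rw [← Real.exp_add]; ring_nf
  -- `(m + 1) (e^{z/(m+1)} - 1)` is a difference quotient of `λ ↦ e^{λz}` at `λ = 0`.
  · have hd : HasDerivAt (fun t : ℂ => Complex.exp (t * z)) z 0 := by
      simpa using ((hasDerivAt_id (0 : ℂ)).mul_const z).cexp
    have ht : Tendsto (fun m : ℕ => ((m : ℂ) + 1)⁻¹) atTop (𝓝[≠] 0) :=
      tendsto_nhdsWithin_iff.2 ⟨by simpa using tendsto_one_div_add_atTop_nhds_zero_nat (𝕜 := ℂ),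
        Eventually.of_forall fun m => by simp [Nat.cast_add_one_ne_zero]⟩
    simpa [Function.comp_def] using (hasDerivAt_iff_tendsto_slope_zero.1 hd).comp ht

theorem expSums_le_expTypeLimits_polyFunctions : expSums ≤ expTypeLimits polyFunctions :=
  Algebra.adjoin_le <| by
    rintro _ ⟨a, rfl⟩
    exact exp_mul_mem_expTypeLimits_polyFunctions a.toAdd

theorem polyFunctions_le_expTypeLimits_expSums : polyFunctions ≤ expTypeLimits expSums :=
  Algebra.adjoin_le (Set.singleton_subset_iff.2 id_mem_expTypeLimits_expSums)

theorem inExpClosure_iff {F H : ℂ → ℂ} :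
    InExpClosure F H ↔ MemFock H ∧ InFockClosure expSums F H := by
  simp [InExpClosure, InFockClosure, mem_expSums_iff]

theorem inPolyClosure_iff {F H : ℂ → ℂ} :
    InPolyClosure F H ↔ MemFock H ∧ InFockClosure polyFunctions F H := by
  simp [InPolyClosure, InFockClosure, mem_polyFunctions_iff]

theorem exp_span_eq_poly_span (F : ℂ → ℂ) (hF : Differentiable ℂ F)
    (hgrowth : ∀ A : ℝ, 0 < A → ∃ C : ℝ, ∀ z : ℂ,
      ‖F z‖ ≤ C * Real.exp (Real.pi * ‖z‖ ^ 2 / 2 - A * ‖z‖)) :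
    ∀ H : ℂ → ℂ, InExpClosure F H ↔ InPolyClosure F H := by
  intro H
  rw [inExpClosure_iff, inPolyClosure_iff]
  refine and_congr_right' ⟨?_, ?_⟩
  · exact InFockClosure.of_subset_expTypeLimits hF.continuous.measurable hgrowth
      (fun _ hu => (continuous_of_mem_expSums hu).measurable)
      (fun _ hu => (continuous_of_mem_polyFunctions hu).measurable)
      expSums_le_expTypeLimits_polyFunctions
  · exact InFockClosure.of_subset_expTypeLimits hF.continuous.measurable hgrowth
      (fun _ hu => (continuous_of_mem_polyFunctions hu).measurable)
      (fun _ hu => (continuous_of_mem_expSums hu).measurable)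
      polyFunctions_le_expTypeLimits_expSums
end

section
/- Let F ∈ 𝓕₀, let H ∈ [F]_𝓕, and let λ ∈ ℂ be such that H(λ) = 0 and F(λ) ≠ 0. Then the entire function z ↦ H(z)/(z−λ) belongs to [F]_𝓕. -/
open MeasureTheory Complex Filter Metric Set

/-! Point evaluations are bounded on `𝓕`, by the sub-mean-value property of `|g|²` on discs.
Hence dividing a function that vanishes at `λ` by `z - λ` is bounded on `𝓕`: near `λ` by the
maximum principle, away from `λ` trivially. If `pF` approximates `H`, then `φ = pF - H` is small,
so is `φ(λ) = p(λ) F(λ)`, and `q = (p - p(λ)) / (z - λ)` satisfies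
`qF - H / (z - λ) = (φ - φ(λ) F / F(λ)) / (z - λ)`, which is therefore small as well. -/

open Real

theorem norm_circleAverage_le {E : Type*} [NormedAddCommGroup E] [NormedSpace ℝ E]
    (f : ℂ → E) (c : ℂ) (R : ℝ) :
    ‖circleAverage f c R‖ ≤ circleAverage (fun z => ‖f z‖) c R := by
  rw [circleAverage_def, circleAverage_def, norm_smul, smul_eq_mul, norm_inv,
    Real.norm_of_nonneg two_pi_pos.le]
  gcongr
  exact intervalIntegral.norm_integral_le_integral_norm two_pi_pos.le

theorem norm_sq_le_circleAverage_norm_sq {f : ℂ → ℂ} {c : ℂ} {R : ℝ}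
    (hf : DiffContOnCl ℂ f (ball c |R|)) :
    ‖f c‖ ^ 2 ≤ circleAverage (fun z => ‖f z‖ ^ 2) c R := by
  have hf2 : DiffContOnCl ℂ (fun z => f z ^ 2) (ball c |R|) := ⟨hf.1.pow 2, hf.2.pow 2⟩
  calc ‖f c‖ ^ 2 = ‖circleAverage (fun z => f z ^ 2) c R‖ := by
        rw [hf2.circleAverage, norm_pow]
    _ ≤ circleAverage (fun z => ‖f z‖ ^ 2) c R := by
        convert norm_circleAverage_le (fun z => f z ^ 2) c R using 3
        rw [norm_pow]

theorem circleAverage_eq_integral_Ioo {E : Type*} [NormedAddCommGroup E] [NormedSpace ℝ E]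
    (f : ℂ → E) (c : ℂ) (R : ℝ) :
    circleAverage f c R = (2 * π)⁻¹ • ∫ θ in Ioo (-π) π, f (circleMap c R θ) := by
  have hper : Function.Periodic (fun θ => f (circleMap c R θ)) (2 * π) := fun θ => by
    simp only [periodic_circleMap c R θ]
  have := hper.intervalIntegral_add_eq 0 (-π)
  rw [zero_add, show -π + 2 * π = π by ring] at this
  rw [circleAverage_def, this, intervalIntegral.integral_of_le (by linarith [pi_pos]),
    integral_Ioc_eq_integral_Ioo]

theorem Differentiable.two_pi_mul_norm_sq_le_lintegral_circle {g : ℂ → ℂ}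
    (hg : Differentiable ℂ g) (c : ℂ) (ρ : ℝ) :
    ENNReal.ofReal (2 * π * ‖g c‖ ^ 2) ≤
      ∫⁻ θ in Ioo (-π) π, ENNReal.ofReal (‖g (circleMap c ρ θ)‖ ^ 2) := by
  have hcont : Continuous fun z => ‖g z‖ ^ 2 := hg.continuous.norm.pow 2
  have hint : IntegrableOn (fun θ => ‖g (circleMap c ρ θ)‖ ^ 2) (Ioo (-π) π) :=
    ((hcont.comp (continuous_circleMap c ρ)).integrableOn_Icc).mono_set Ioo_subset_Icc_self
  rw [← ofReal_integral_eq_lintegral_ofReal hint (Eventually.of_forall fun θ => by positivity)]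
  gcongr
  have := norm_sq_le_circleAverage_norm_sq (hg.diffContOnCl (s := ball c |ρ|))
  rw [circleAverage_eq_integral_Ioo, smul_eq_mul] at this
  exact (le_inv_mul_iff₀ two_pi_pos).1 this

theorem setLIntegral_Ioo_zero_ofReal (r : ℝ) (hr : 0 ≤ r) :
    ∫⁻ ρ in Ioo 0 r, ENNReal.ofReal ρ = ENNReal.ofReal (r ^ 2 / 2) := by
  have hint : IntegrableOn (fun ρ : ℝ => ρ) (Ioo 0 r) :=
    continuous_id.integrableOn_Icc.mono_set Ioo_subset_Icc_self
  have hnonneg : 0 ≤ᵐ[volume.restrict (Ioo 0 r)] fun ρ : ℝ => ρ :=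
    (ae_restrict_iff' measurableSet_Ioo).2 (Eventually.of_forall fun ρ hρ => hρ.1.le)
  rw [← ofReal_integral_eq_lintegral_ofReal hint hnonneg, ← integral_Ioc_eq_integral_Ioo,
    ← intervalIntegral.integral_of_le hr, integral_id]
  norm_num

theorem Complex.polarCoord_symm_eq_circleMap (p : ℝ × ℝ) :
    Complex.polarCoord.symm p = circleMap 0 p.1 p.2 := by
  rw [Complex.polarCoord_symm_apply, circleMap_zero, Complex.exp_mul_I]
  push_cast
  ring

theorem lintegral_circleMap_le_setLIntegral_ball {f : ℂ → ENNReal} (hf : Measurable f) (r : ℝ) :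
    ∫⁻ ρ in Ioo 0 r, ∫⁻ θ in Ioo (-π) π, ENNReal.ofReal ρ * f (circleMap 0 ρ θ) ≤
      ∫⁻ z in ball 0 r, f z := by
  set S : Set (ℝ × ℝ) := Ioo 0 r ×ˢ Ioo (-π) π
  have hS : S ⊆ polarCoord.target := by
    rw [polarCoord_target]; exact prod_mono Ioo_subset_Ioi_self subset_rfl
  have hmeas : Measurable fun p : ℝ × ℝ => ENNReal.ofReal p.1 * f (circleMap 0 p.1 p.2) := by
    have : Continuous fun p : ℝ × ℝ => circleMap 0 p.1 p.2 := by unfold circleMap; fun_prop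
    exact measurable_fst.ennreal_ofReal.mul (hf.comp this.measurable)
  have hpolar : ∀ p ∈ S, ENNReal.ofReal p.1 * f (circleMap 0 p.1 p.2) =
      ENNReal.ofReal p.1 • (ball 0 r).indicator f (Complex.polarCoord.symm p) := by
    rintro ⟨ρ, θ⟩ ⟨hρ, -⟩
    have hball : circleMap 0 ρ θ ∈ ball 0 r := by simp [abs_of_pos hρ.1, hρ.2]
    rw [Complex.polarCoord_symm_eq_circleMap, indicator_of_mem hball, smul_eq_mul]
  calc ∫⁻ ρ in Ioo 0 r, ∫⁻ θ in Ioo (-π) π, ENNReal.ofReal ρ * f (circleMap 0 ρ θ)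
      = ∫⁻ p in S, ENNReal.ofReal p.1 * f (circleMap 0 p.1 p.2) := by
        rw [Measure.volume_eq_prod, ← Measure.prod_restrict, lintegral_prod _ hmeas.aemeasurable]
    _ = ∫⁻ p in S, ENNReal.ofReal p.1 • (ball 0 r).indicator f (Complex.polarCoord.symm p) :=
        setLIntegral_congr_fun (measurableSet_Ioo.prod measurableSet_Ioo) hpolar
    _ ≤ ∫⁻ p in polarCoord.target,
          ENNReal.ofReal p.1 • (ball 0 r).indicator f (Complex.polarCoord.symm p) :=
        lintegral_mono_set hS
    _ = ∫⁻ z in ball 0 r, f z := by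
        rw [Complex.lintegral_comp_polarCoord_symm, lintegral_indicator measurableSet_ball]

theorem Differentiable.ofReal_pi_mul_sq_mul_norm_sq_le_lintegral_ball {g : ℂ → ℂ}
    (hg : Differentiable ℂ g) {r : ℝ} (hr : 0 ≤ r) :
    ENNReal.ofReal (π * r ^ 2 * ‖g 0‖ ^ 2) ≤ ∫⁻ z in ball 0 r, ENNReal.ofReal (‖g z‖ ^ 2) := by
  calc ENNReal.ofReal (π * r ^ 2 * ‖g 0‖ ^ 2)
      = (∫⁻ ρ in Ioo 0 r, ENNReal.ofReal ρ) * ENNReal.ofReal (2 * π * ‖g 0‖ ^ 2) := by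
        rw [setLIntegral_Ioo_zero_ofReal r hr, ← ENNReal.ofReal_mul (by positivity)]
        ring_nf
    _ = ∫⁻ ρ in Ioo 0 r, ENNReal.ofReal ρ * ENNReal.ofReal (2 * π * ‖g 0‖ ^ 2) :=
        (lintegral_mul_const _ ENNReal.measurable_ofReal).symm
    _ ≤ ∫⁻ ρ in Ioo 0 r,
          ENNReal.ofReal ρ * ∫⁻ θ in Ioo (-π) π, ENNReal.ofReal (‖g (circleMap 0 ρ θ)‖ ^ 2) := by
        gcongr with ρ
        exact hg.two_pi_mul_norm_sq_le_lintegral_circle 0 ρ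
    _ = ∫⁻ ρ in Ioo 0 r,
          ∫⁻ θ in Ioo (-π) π, ENNReal.ofReal ρ * ENNReal.ofReal (‖g (circleMap 0 ρ θ)‖ ^ 2) := by
        simp_rw [lintegral_const_mul' _ _ ENNReal.ofReal_ne_top]
    _ ≤ ∫⁻ z in ball 0 r, ENNReal.ofReal (‖g z‖ ^ 2) :=
        lintegral_circleMap_le_setLIntegral_ball
          (f := fun z => ENNReal.ofReal (‖g z‖ ^ 2))
          (hg.continuous.norm.pow 2).measurable.ennreal_ofReal r

theorem Differentiable.ofReal_pi_mul_norm_sq_le_fockNormSq {g : ℂ → ℂ} (hg : Differentiable ℂ g)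
    {c : ℂ} {R : ℝ} (hc : ‖c‖ ≤ R) :
    ENNReal.ofReal (π * ‖g c‖ ^ 2) ≤ ENNReal.ofReal (Real.exp (π * (R + 1) ^ 2)) * fockNormSq g := by
  have hweight : ∀ z ∈ ball (0 : ℂ) 1, 1 ≤ Real.exp (π * (R + 1) ^ 2) * Real.exp (-π * ‖c + z‖ ^ 2) := by
    intro z hz
    have hcz : ‖c + z‖ ≤ R + 1 := (norm_add_le c z).trans (add_le_add hc (mem_ball_zero_iff.1 hz).le)
    rw [← Real.exp_add, Real.one_le_exp_iff]
    have : ‖c + z‖ ^ 2 ≤ (R + 1) ^ 2 := pow_le_pow_left₀ (norm_nonneg _) hcz 2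
    nlinarith [pi_pos]
  calc ENNReal.ofReal (π * ‖g c‖ ^ 2)
      ≤ ∫⁻ z in ball 0 1, ENNReal.ofReal (‖g (c + z)‖ ^ 2) := by
        simpa using (hg.comp ((differentiable_const c).add differentiable_id)
          ).ofReal_pi_mul_sq_mul_norm_sq_le_lintegral_ball zero_le_one
    _ ≤ ∫⁻ z in ball 0 1, ENNReal.ofReal (Real.exp (π * (R + 1) ^ 2)) *
          ENNReal.ofReal (‖g (c + z)‖ ^ 2 * Real.exp (-π * ‖c + z‖ ^ 2)) := by
        refine setLIntegral_mono' measurableSet_ball fun z hz => ?_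
        rw [← ENNReal.ofReal_mul (Real.exp_nonneg _)]
        gcongr
        nlinarith [hweight z hz, sq_nonneg ‖g (c + z)‖]
    _ ≤ ∫⁻ z, ENNReal.ofReal (Real.exp (π * (R + 1) ^ 2)) *
          ENNReal.ofReal (‖g (c + z)‖ ^ 2 * Real.exp (-π * ‖c + z‖ ^ 2)) :=
        setLIntegral_le_lintegral _ _
    _ = ENNReal.ofReal (Real.exp (π * (R + 1) ^ 2)) * fockNormSq g := by
        rw [lintegral_const_mul' _ _ ENNReal.ofReal_ne_top, fockNormSq,
          lintegral_add_left_eq_self (fun z => ENNReal.ofReal (‖g z‖ ^ 2 * Real.exp (-π * ‖z‖ ^ 2))) c]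

theorem differentiable_dslope {g : ℂ → ℂ} (hg : Differentiable ℂ g) (c : ℂ) :
    Differentiable ℂ (dslope g c) :=
  differentiableOn_univ.1 ((differentiableOn_dslope univ_mem).2 hg.differentiableOn)

theorem Differentiable.norm_dslope_le_of_mem_closedBall {g : ℂ → ℂ} (hg : Differentiable ℂ g)
    {c : ℂ} {r M : ℝ} (hr : 0 < r) (hM : ∀ ζ ∈ sphere c r, ‖g ζ - g c‖ ≤ M * r) {z : ℂ}
    (hz : z ∈ closedBall c r) : ‖dslope g c z‖ ≤ M := by
  refine Complex.norm_le_of_forall_mem_frontier_norm_le isBounded_ball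
    (differentiable_dslope hg c).diffContOnCl (fun ζ hζ => ?_) (by rwa [closure_ball c hr.ne'])
  rw [frontier_ball c hr.ne'] at hζ
  rw [dslope_of_ne _ (ne_of_mem_sphere hζ hr.ne'), slope_def_field, norm_div,
    mem_sphere_iff_norm.1 hζ, div_le_iff₀ hr]
  exact hM ζ hζ

theorem Differentiable.ofReal_norm_dslope_sq_le {g : ℂ → ℂ} (hg : Differentiable ℂ g) {lam : ℂ}
    (h0 : g lam = 0) {z : ℂ} (hz : z ∈ closedBall lam 1) :
    ENNReal.ofReal (‖dslope g lam z‖ ^ 2) ≤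
      ENNReal.ofReal (Real.exp (π * (‖lam‖ + 2) ^ 2) / π) * fockNormSq g := by
  set E := Real.exp (π * (‖lam‖ + 2) ^ 2)
  by_cases htop : fockNormSq g = ⊤
  · rw [htop, ENNReal.mul_top (ENNReal.ofReal_pos.2 (by positivity)).ne']
    exact le_top
  set N := (fockNormSq g).toReal
  have hN : fockNormSq g = ENNReal.ofReal N := (ENNReal.ofReal_toReal htop).symm
  have hsphere : ∀ ζ ∈ sphere lam 1, ‖g ζ - g lam‖ ≤ Real.sqrt (E * N / π) * 1 := by
    intro ζ hζ
    have hζR : ‖ζ‖ ≤ ‖lam‖ + 1 := by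
      simpa [mem_sphere_iff_norm.1 hζ] using norm_le_norm_add_norm_sub' ζ lam
    have := hg.ofReal_pi_mul_norm_sq_le_fockNormSq hζR
    rw [hN, ← ENNReal.ofReal_mul (Real.exp_nonneg _),
      ENNReal.ofReal_le_ofReal_iff (by positivity), show ‖lam‖ + 1 + 1 = ‖lam‖ + 2 by ring] at this
    rw [h0, sub_zero, mul_one]
    refine Real.le_sqrt_of_sq_le ?_
    rw [le_div_iff₀ pi_pos]
    linarith
  have hball := hg.norm_dslope_le_of_mem_closedBall one_pos hsphere hz
  rw [hN, ← ENNReal.ofReal_mul (by positivity)]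
  gcongr
  calc ‖dslope g lam z‖ ^ 2 ≤ Real.sqrt (E * N / π) ^ 2 := by gcongr
    _ = E / π * N := by rw [Real.sq_sqrt (by positivity)]; ring

theorem Differentiable.fockNormSq_dslope_le {g : ℂ → ℂ} (hg : Differentiable ℂ g) {lam : ℂ}
    (h0 : g lam = 0) :
    fockNormSq (dslope g lam) ≤
      ENNReal.ofReal (Real.exp (π * (‖lam‖ + 2) ^ 2) + 1) * fockNormSq g := by
  set E := Real.exp (π * (‖lam‖ + 2) ^ 2)
  have hin : ∀ z ∈ closedBall lam 1,
      ENNReal.ofReal (‖dslope g lam z‖ ^ 2 * Real.exp (-π * ‖z‖ ^ 2)) ≤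
        ENNReal.ofReal (E / π) * fockNormSq g := by
    intro z hz
    refine le_trans ?_ (hg.ofReal_norm_dslope_sq_le h0 hz)
    gcongr
    exact mul_le_of_le_one_right (by positivity)
      (Real.exp_le_one_iff.2 (by nlinarith [pi_pos, norm_nonneg z]))
  have hout : ∀ z ∈ (closedBall lam 1)ᶜ,
      ENNReal.ofReal (‖dslope g lam z‖ ^ 2 * Real.exp (-π * ‖z‖ ^ 2)) ≤
        ENNReal.ofReal (‖g z‖ ^ 2 * Real.exp (-π * ‖z‖ ^ 2)) := by
    intro z hz
    have hz1 : 1 ≤ ‖z - lam‖ := by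
      simpa [dist_eq_norm] using (not_le.1 (mem_closedBall.not.1 hz)).le
    have hzlam : z ≠ lam := by rintro rfl; norm_num at hz1
    rw [dslope_of_ne _ hzlam, slope_def_field, h0, sub_zero, norm_div]
    gcongr
    exact div_le_self (norm_nonneg _) hz1
  calc fockNormSq (dslope g lam)
      = (∫⁻ z in closedBall lam 1,
          ENNReal.ofReal (‖dslope g lam z‖ ^ 2 * Real.exp (-π * ‖z‖ ^ 2))) +
        ∫⁻ z in (closedBall lam 1)ᶜ,
          ENNReal.ofReal (‖dslope g lam z‖ ^ 2 * Real.exp (-π * ‖z‖ ^ 2)) :=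
        (lintegral_add_compl _ measurableSet_closedBall).symm
    _ ≤ (∫⁻ _ in closedBall lam 1, ENNReal.ofReal (E / π) * fockNormSq g) + fockNormSq g :=
        add_le_add (setLIntegral_mono' measurableSet_closedBall hin)
          ((setLIntegral_mono' measurableSet_closedBall.compl hout).trans
            (setLIntegral_le_lintegral _ _))
    _ = ENNReal.ofReal (E + 1) * fockNormSq g := by
        rw [setLIntegral_const, Complex.volume_closedBall, ENNReal.ofReal_one, one_pow, one_mul,
          ← ENNReal.ofReal_coe_nnreal, NNReal.coe_real_pi, mul_right_comm,
          ← ENNReal.ofReal_mul (by positivity), div_mul_cancel₀ _ pi_ne_zero,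
          ENNReal.ofReal_add (Real.exp_nonneg _) zero_le_one, ENNReal.ofReal_one, add_mul, one_mul]

theorem fockNormSq_sub_le {u v : ℂ → ℂ} (hu : Continuous u) :
    fockNormSq (fun z => u z - v z) ≤ 2 * fockNormSq u + 2 * fockNormSq v := by
  have hmeas : Measurable fun z => ENNReal.ofReal (‖u z‖ ^ 2 * Real.exp (-π * ‖z‖ ^ 2)) := by
    apply ENNReal.measurable_ofReal.comp
    exact (by fun_prop : Continuous fun z => ‖u z‖ ^ 2 * Real.exp (-π * ‖z‖ ^ 2)).measurable
  rw [fockNormSq, fockNormSq, fockNormSq, ← lintegral_const_mul' _ _ ENNReal.ofNat_ne_top,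
    ← lintegral_const_mul' _ _ ENNReal.ofNat_ne_top, ← lintegral_add_left (hmeas.const_mul 2)]
  refine lintegral_mono fun z => ?_
  have hsq : ‖u z - v z‖ ^ 2 ≤ 2 * (‖u z‖ ^ 2 + ‖v z‖ ^ 2) :=
    (pow_le_pow_left₀ (norm_nonneg _) (norm_sub_le _ _) 2).trans add_sq_le
  rw [← ENNReal.ofReal_ofNat 2, ← ENNReal.ofReal_mul zero_le_two, ← ENNReal.ofReal_mul zero_le_two,
    ← ENNReal.ofReal_add (by positivity) (by positivity)]
  gcongr
  nlinarith [Real.exp_pos (-π * ‖z‖ ^ 2)]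

theorem fockNormSq_const_mul (c : ℂ) (f : ℂ → ℂ) :
    fockNormSq (fun z => c * f z) = ENNReal.ofReal (‖c‖ ^ 2) * fockNormSq f := by
  rw [fockNormSq, fockNormSq, ← lintegral_const_mul' _ _ ENNReal.ofReal_ne_top]
  refine lintegral_congr fun z => ?_
  rw [← ENNReal.ofReal_mul (by positivity), norm_mul, mul_pow, mul_assoc]

theorem MemFock.dslope {g : ℂ → ℂ} (hg : MemFock g) {lam : ℂ} (h0 : g lam = 0) :
    MemFock (dslope g lam) :=
  ⟨differentiable_dslope hg.1 lam,
    (hg.1.fockNormSq_dslope_le h0).trans_lt (ENNReal.mul_lt_top ENNReal.ofReal_lt_top hg.2)⟩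

theorem Differentiable.fockNormSq_sub_div_mul_le {φ F : ℂ → ℂ} (hφ : Differentiable ℂ φ)
    (hF : MemFock F) {lam : ℂ} (hFlam : F lam ≠ 0) :
    fockNormSq (fun z => φ z - φ lam / F lam * F z) ≤
      ENNReal.ofReal (2 + 2 * (Real.exp (π * (‖lam‖ + 1) ^ 2) / (π * ‖F lam‖ ^ 2)) *
        (fockNormSq F).toReal) * fockNormSq φ := by
  set E := Real.exp (π * (‖lam‖ + 1) ^ 2)
  set C := E / (π * ‖F lam‖ ^ 2)
  by_cases htop : fockNormSq φ = ⊤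
  · rw [htop, ENNReal.mul_top (ENNReal.ofReal_pos.2 (by positivity)).ne']
    exact le_top
  set N := (fockNormSq φ).toReal
  have hN : fockNormSq φ = ENNReal.ofReal N := (ENNReal.ofReal_toReal htop).symm
  set A := (fockNormSq F).toReal
  have hA : fockNormSq F = ENNReal.ofReal A := (ENNReal.ofReal_toReal hF.2.ne).symm
  have heval : ‖φ lam / F lam‖ ^ 2 ≤ C * N := by
    have := hφ.ofReal_pi_mul_norm_sq_le_fockNormSq (le_refl ‖lam‖)
    rw [hN, ← ENNReal.ofReal_mul (Real.exp_nonneg _),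
      ENNReal.ofReal_le_ofReal_iff (by positivity)] at this
    rw [norm_div, div_pow, div_le_iff₀ (by positivity)]
    calc ‖φ lam‖ ^ 2 = π * ‖φ lam‖ ^ 2 / π := by field_simp
      _ ≤ E * N / π := by gcongr
      _ = C * N * ‖F lam‖ ^ 2 := by simp only [C]; field_simp
  calc fockNormSq (fun z => φ z - φ lam / F lam * F z)
      ≤ 2 * fockNormSq φ + 2 * fockNormSq (fun z => φ lam / F lam * F z) :=
        fockNormSq_sub_le hφ.continuous
    _ ≤ 2 * ENNReal.ofReal N + 2 * (ENNReal.ofReal (C * N) * fockNormSq F) := by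
        rw [fockNormSq_const_mul, hN]
        gcongr
    _ = ENNReal.ofReal (2 + 2 * C * A) * fockNormSq φ := by
        rw [hN, hA, ← ENNReal.ofReal_mul (by positivity), ← ENNReal.ofReal_ofNat 2,
          ← ENNReal.ofReal_mul zero_le_two, ← ENNReal.ofReal_mul zero_le_two,
          ← ENNReal.ofReal_add (by positivity) (by positivity),
          ← ENNReal.ofReal_mul (by positivity)]
        congr 1
        ring

theorem exists_fockNormSq_mul_sub_dslope_le {F H : ℂ → ℂ} (hF : MemFock F)
    (hH : Differentiable ℂ H) {lam : ℂ} (hHlam : H lam = 0) (hFlam : F lam ≠ 0) :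
    ∃ A : ℝ, ∀ p : Polynomial ℂ, ∃ q : Polynomial ℂ,
      fockNormSq (fun z => q.eval z * F z - dslope H lam z) ≤
        ENNReal.ofReal A * fockNormSq (fun z => p.eval z * F z - H z) := by
  refine ⟨(Real.exp (π * (‖lam‖ + 2) ^ 2) + 1) *
    (2 + 2 * (Real.exp (π * (‖lam‖ + 1) ^ 2) / (π * ‖F lam‖ ^ 2)) * (fockNormSq F).toReal),
    fun p => ⟨(p - Polynomial.C (p.eval lam)) /ₘ (Polynomial.X - Polynomial.C lam), ?_⟩⟩
  set q := (p - Polynomial.C (p.eval lam)) /ₘ (Polynomial.X - Polynomial.C lam)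
  set φ : ℂ → ℂ := fun z => p.eval z * F z - H z
  have hφ : Differentiable ℂ φ := (p.differentiable.mul hF.1).sub hH
  set g : ℂ → ℂ := fun z => φ z - φ lam / F lam * F z
  have hg : Differentiable ℂ g := hφ.sub ((differentiable_const _).mul hF.1)
  have hq : ∀ z, (z - lam) * q.eval z = p.eval z - p.eval lam := fun z => by
    have := congrArg (Polynomial.eval z) (Polynomial.mul_divByMonic_eq_iff_isRoot.2
      (by simp : (p - Polynomial.C (p.eval lam)).IsRoot lam))
    simpa using this
  have hquot : (fun z => q.eval z * F z - dslope H lam z) = dslope g lam := by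
    refine Continuous.ext_on (dense_compl_singleton lam)
      ((q.continuous.mul hF.1.continuous).sub (differentiable_dslope hH lam).continuous)
      (differentiable_dslope hg lam).continuous fun z (hz : z ≠ lam) => ?_
    simp only [dslope_of_ne _ hz, slope_def_field, g, φ, hHlam, sub_zero,
      mul_div_cancel_right₀ _ hFlam, sub_self]
    field_simp
    linear_combination F z * hq z
  rw [hquot, ENNReal.ofReal_mul (by positivity), mul_assoc]
  exact (hg.fockNormSq_dslope_le (by simp [g, hFlam])).trans
    (mul_le_mul_right (hφ.fockNormSq_sub_div_mul_le hF hFlam) _)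

theorem InPolyClosure.of_fockNormSq_le {F H H₁ : ℂ → ℂ} (hH : InPolyClosure F H)
    (hH₁ : MemFock H₁) {A : ℝ}
    (hA : ∀ p : Polynomial ℂ, ∃ q : Polynomial ℂ,
      fockNormSq (fun z => q.eval z * F z - H₁ z) ≤
        ENNReal.ofReal A * fockNormSq (fun z => p.eval z * F z - H z)) :
    InPolyClosure F H₁ := by
  refine ⟨hH₁, fun ε hε => ?_⟩
  set B := max A 0 + 1
  have hB : 0 < B := by positivity
  obtain ⟨p, hp⟩ := hH.2 (ε / Real.sqrt B) (by positivity)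
  obtain ⟨q, hq⟩ := hA p
  refine ⟨q, hq.trans_lt ?_⟩
  calc ENNReal.ofReal A * fockNormSq (fun z => p.eval z * F z - H z)
      ≤ ENNReal.ofReal A * ENNReal.ofReal ((ε / Real.sqrt B) ^ 2) := by gcongr
    _ = ENNReal.ofReal (A * (ε ^ 2 / B)) := by
        rw [← ENNReal.ofReal_mul' (by positivity), div_pow, Real.sq_sqrt hB.le]
    _ < ENNReal.ofReal (ε ^ 2) := by
        rw [ENNReal.ofReal_lt_ofReal_iff (by positivity), mul_div_assoc', div_lt_iff₀ hB]
        nlinarith [le_max_left A 0, sq_pos_of_pos hε]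

theorem division_in_poly_closure (F : ℂ → ℂ) (hF : MemFock0 F) (H : ℂ → ℂ)
    (hH : InPolyClosure F H) (lam : ℂ) (hHlam : H lam = 0) (hFlam : F lam ≠ 0) :
    ∃ H₁ : ℂ → ℂ, Differentiable ℂ H₁ ∧
      (∀ z : ℂ, z ≠ lam → H₁ z = H z / (z - lam)) ∧
      InPolyClosure F H₁ := by
  have hFfock : MemFock F := by simpa using hF.2 1
  obtain ⟨A, hA⟩ := exists_fockNormSq_mul_sub_dslope_le hFfock hH.1.1 hHlam hFlam
  refine ⟨dslope H lam, differentiable_dslope hH.1.1 lam, fun z hz => ?_,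
    hH.of_fockNormSq_le (hH.1.dslope hHlam) hA⟩
  rw [dslope_of_ne _ hz, slope_def_field, hHlam, sub_zero]
end

section
/- Let F ∈ 𝓕₀ and let H ∈ 𝓔₂ be of completely regular growth with inf_{θ∈[0,2π]} h_H(θ) > 0, such that H has only simple zeros, the zero sets of F and H are disjoint, and F·H ∈ [F]_𝓕. Let W be an entire function with F·W ∈ 𝓕 and ⟨pF, FW⟩ = 0 for every polynomial p. Then for every z ∈ ℂ one has H(z)·∫_ℂ F(ζ)·conj(F(ζ)W(ζ))/(z−ζ) dν(ζ) = ∫_ℂ F(ζ)H(ζ)·conj(F(ζ)W(ζ))/(z−ζ) dν(ζ). -/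
open MeasureTheory Complex Filter Metric Set

/-! For a polynomial `p`, the difference quotient `(p z - p ζ) / (z - ζ)` is a polynomial in `ζ`,
so the orthogonality of `F W` to all polynomial multiples of `F` turns the Cauchy-type integral of
`p F` into `p z` times that of `F`. Approximating `F H` by `pₙ F` in `𝓕` passes this to the limit:
the Cauchy-type integral is a bounded functional on `𝓕`, because point evaluations are locally
bounded (sub-mean-value property over unit discs) and `1 / |z - ζ|` is integrable near `z`; and
`pₙ z → H z` by the maximum principle on a small circle around `z` on which `F` does not vanish. -/

open scoped Real ENNReal ComplexConjugate Topology

theorem lintegral_ball_eq_lintegral_circleMap {f : ℂ → ℝ≥0∞} (hf : Measurable f) (c : ℂ)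
    (R : ℝ) :
    ∫⁻ ζ in ball c R, f ζ =
      ∫⁻ r in Ioo 0 R, ENNReal.ofReal r * ∫⁻ θ in Ioo (-π) π, f (circleMap c r θ) := by
  have hpolar : ∀ p : ℝ × ℝ, c + Complex.polarCoord.symm p = circleMap c p.1 p.2 := fun p => by
    simp [Complex.polarCoord_symm_apply, circleMap, Complex.exp_mul_I]
  have hmeas : Measurable fun p : ℝ × ℝ => ENNReal.ofReal p.1 * f (circleMap c p.1 p.2) :=
    (ENNReal.measurable_ofReal.comp measurable_fst).mul
      (hf.comp (Real.circleMap.continuous (c := c)).measurable)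
  have htarget : polarCoord.target ∩ (Iio R ×ˢ univ) = Ioo 0 R ×ˢ Ioo (-π) π := by
    ext ⟨r, θ⟩
    simp [polarCoord_target, and_assoc, and_comm, and_left_comm]
  calc ∫⁻ ζ in ball c R, f ζ = ∫⁻ x, (ball c R).indicator f (c + x) := by
        rw [lintegral_add_left_eq_self, lintegral_indicator measurableSet_ball]
    _ = ∫⁻ p in polarCoord.target, (Iio R ×ˢ univ).indicator
          (fun p : ℝ × ℝ => ENNReal.ofReal p.1 * f (circleMap c p.1 p.2)) p := by
        rw [← Complex.lintegral_comp_polarCoord_symm]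
        refine setLIntegral_congr_fun polarCoord.open_target.measurableSet fun p hp => ?_
        have hball : circleMap c p.1 p.2 ∈ ball c R ↔ p.1 < R := by
          rw [mem_ball, dist_eq_norm, circleMap_sub_center, norm_circleMap_zero,
            abs_of_pos hp.1]
        simp only [smul_eq_mul, hpolar, indicator, hball, mem_prod, mem_Iio, mem_univ, and_true]
        split_ifs <;> simp
    _ = ∫⁻ p in Ioo 0 R ×ˢ Ioo (-π) π, ENNReal.ofReal p.1 * f (circleMap c p.1 p.2) := by
        rw [lintegral_indicator (measurableSet_Iio.prod MeasurableSet.univ),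
          Measure.restrict_restrict (measurableSet_Iio.prod MeasurableSet.univ), inter_comm,
          htarget]
    _ = _ := by
        rw [Measure.volume_eq_prod, ← Measure.prod_restrict, lintegral_prod _ hmeas.aemeasurable]
        simp only [lintegral_const_mul' _ _ ENNReal.ofReal_ne_top]

theorem sq_norm_le_circleAverage {g : ℂ → ℂ} (hg : Differentiable ℂ g) (c : ℂ) (r : ℝ) :
    ‖g c‖ ^ 2 ≤ Real.circleAverage (fun ζ => ‖g ζ‖ ^ 2) c r := by
  have hmean : Real.circleAverage (fun ζ => g ζ ^ 2) c r = g c ^ 2 :=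
    (hg.pow 2).diffContOnCl.circleAverage
  rw [← norm_pow, ← hmean, Real.circleAverage_def, Real.circleAverage_def, norm_smul,
    smul_eq_mul, norm_inv, Real.norm_of_nonneg Real.two_pi_pos.le]
  gcongr
  refine (intervalIntegral.norm_integral_le_integral_norm Real.two_pi_pos.le).trans_eq ?_
  simp only [norm_pow]

theorem ofReal_two_pi_mul_sq_norm_le_lintegral_circleMap {g : ℂ → ℂ} (hg : Differentiable ℂ g)
    (c : ℂ) (r : ℝ) :
    ENNReal.ofReal (2 * π * ‖g c‖ ^ 2) ≤
      ∫⁻ θ in Ioo (-π) π, ENNReal.ofReal (‖g (circleMap c r θ)‖ ^ 2) := by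
  have hcont : Continuous fun θ => ‖g (circleMap c r θ)‖ ^ 2 :=
    (hg.continuous.comp (continuous_circleMap c r)).norm.pow 2
  have hperiod : ∫ θ in Ioo (-π) π, ‖g (circleMap c r θ)‖ ^ 2 =
      2 * π * Real.circleAverage (fun ζ => ‖g ζ‖ ^ 2) c r := by
    rw [Real.circleAverage_eq_integral_add (-π), intervalIntegral.integral_comp_add_right
      (fun θ => ‖g (circleMap c r θ)‖ ^ 2), smul_eq_mul, ← mul_assoc,
      mul_inv_cancel₀ Real.two_pi_pos.ne', one_mul, zero_add, intervalIntegral.integral_of_le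
      (by linarith [Real.pi_pos]), integral_Ioc_eq_integral_Ioo]
    ring_nf
  rw [← ofReal_integral_eq_lintegral_ofReal (hcont.integrableOn_Icc.mono_set Ioo_subset_Icc_self)
    (Eventually.of_forall fun θ => by positivity), hperiod]
  gcongr
  exact sq_norm_le_circleAverage hg c r

theorem ofReal_pi_mul_sq_mul_sq_norm_le_lintegral_ball {g : ℂ → ℂ} (hg : Differentiable ℂ g)
    (c : ℂ) {R : ℝ} (hR : 0 ≤ R) :
    ENNReal.ofReal (π * R ^ 2 * ‖g c‖ ^ 2) ≤ ∫⁻ ζ in ball c R, ENNReal.ofReal (‖g ζ‖ ^ 2) := by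
  have hradial : ∫⁻ r in Ioo 0 R, ENNReal.ofReal r = ENNReal.ofReal (R ^ 2 / 2) := by
    have hint : IntegrableOn (fun r : ℝ => r) (Ioo 0 R) :=
      continuous_id.integrableOn_Icc.mono_set Ioo_subset_Icc_self
    rw [← ofReal_integral_eq_lintegral_ofReal hint
      ((ae_restrict_iff' measurableSet_Ioo).2 (Eventually.of_forall fun r hr => hr.1.le)),
      ← integral_Ioc_eq_integral_Ioo, ← intervalIntegral.integral_of_le hR, integral_id]
    ring_nf
  rw [lintegral_ball_eq_lintegral_circleMap (f := fun ζ => ENNReal.ofReal (‖g ζ‖ ^ 2))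
    (hg.continuous.norm.pow 2).measurable.ennreal_ofReal]
  calc ENNReal.ofReal (π * R ^ 2 * ‖g c‖ ^ 2)
      = (∫⁻ r in Ioo 0 R, ENNReal.ofReal r) * ENNReal.ofReal (2 * π * ‖g c‖ ^ 2) := by
        rw [hradial, ← ENNReal.ofReal_mul (by positivity)]
        ring_nf
    _ ≤ ∫⁻ r in Ioo 0 R, ENNReal.ofReal r *
          ∫⁻ θ in Ioo (-π) π, ENNReal.ofReal (‖g (circleMap c r θ)‖ ^ 2) := by
        rw [← lintegral_mul_const' _ _ ENNReal.ofReal_ne_top]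
        gcongr with r
        exact ofReal_two_pi_mul_sq_norm_le_lintegral_circleMap hg c r

/-- Junk value `0` when `fockNormSq g = ⊤`. -/
noncomputable def fockNorm (g : ℂ → ℂ) : ℝ := √(fockNormSq g).toReal

theorem fockNorm_nonneg (g : ℂ → ℂ) : 0 ≤ fockNorm g := Real.sqrt_nonneg _

theorem fockNorm_sq (g : ℂ → ℂ) : fockNorm g ^ 2 = (fockNormSq g).toReal :=
  Real.sq_sqrt ENNReal.toReal_nonneg

theorem ofReal_fockNorm {g : ℂ → ℂ} (hg : fockNormSq g ≠ ⊤) :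
    ENNReal.ofReal (fockNorm g) = fockNormSq g ^ (1 / 2 : ℝ) := by
  rw [fockNorm, Real.sqrt_eq_rpow, ← ENNReal.ofReal_rpow_of_nonneg ENNReal.toReal_nonneg
    (by norm_num), ENNReal.ofReal_toReal hg]

theorem fockNorm_lt_of_fockNormSq_lt {g : ℂ → ℂ} {ε : ℝ} (hε : 0 < ε)
    (h : fockNormSq g < ENNReal.ofReal (ε ^ 2)) : fockNorm g < ε :=
  (Real.sqrt_lt' hε).2 (ENNReal.toReal_lt_of_lt_ofReal h)

theorem ofReal_mul_exp_le_fockNormSq {g : ℂ → ℂ} (hg : Differentiable ℂ g) (w : ℂ) :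
    ENNReal.ofReal (π * ‖g w‖ ^ 2 * Real.exp (-π * (‖w‖ + 1) ^ 2)) ≤ fockNormSq g := by
  have hweight : ∀ ζ ∈ ball w 1,
      ENNReal.ofReal (Real.exp (-π * (‖w‖ + 1) ^ 2)) * ENNReal.ofReal (‖g ζ‖ ^ 2) ≤
        ENNReal.ofReal (‖g ζ‖ ^ 2 * Real.exp (-π * ‖ζ‖ ^ 2)) := fun ζ hζ => by
    have hζw : ‖ζ‖ ≤ ‖w‖ + 1 := by
      linarith [norm_sub_norm_le ζ w, mem_ball_iff_norm.1 hζ]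
    rw [← ENNReal.ofReal_mul (Real.exp_pos _).le, mul_comm, neg_mul, neg_mul]
    gcongr
  calc ENNReal.ofReal (π * ‖g w‖ ^ 2 * Real.exp (-π * (‖w‖ + 1) ^ 2))
      = ENNReal.ofReal (Real.exp (-π * (‖w‖ + 1) ^ 2)) *
          ENNReal.ofReal (π * 1 ^ 2 * ‖g w‖ ^ 2) := by
        rw [← ENNReal.ofReal_mul (Real.exp_pos _).le]
        ring_nf
    _ ≤ ENNReal.ofReal (Real.exp (-π * (‖w‖ + 1) ^ 2)) *
          ∫⁻ ζ in ball w 1, ENNReal.ofReal (‖g ζ‖ ^ 2) := by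
        gcongr
        exact ofReal_pi_mul_sq_mul_sq_norm_le_lintegral_ball hg w zero_le_one
    _ ≤ ∫⁻ ζ in ball w 1, ENNReal.ofReal (‖g ζ‖ ^ 2 * Real.exp (-π * ‖ζ‖ ^ 2)) := by
        rw [← lintegral_const_mul' _ _ ENNReal.ofReal_ne_top]
        exact setLIntegral_mono' measurableSet_ball hweight
    _ ≤ fockNormSq g := setLIntegral_le_lintegral _ _

theorem exists_norm_le_mul_fockNorm (z : ℂ) (R : ℝ) :
    ∃ M, ∀ g, MemFock g → ∀ w ∈ closedBall z R, ‖g w‖ ≤ M * fockNorm g := by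
  refine ⟨√(Real.exp (π * (‖z‖ + R + 1) ^ 2) / π), fun g hg w hw => ?_⟩
  have hwz : ‖w‖ + 1 ≤ ‖z‖ + R + 1 := by
    linarith [norm_sub_norm_le w z, mem_closedBall_iff_norm.1 hw]
  have hfock : π * ‖g w‖ ^ 2 * Real.exp (-π * (‖w‖ + 1) ^ 2) ≤ fockNorm g ^ 2 := by
    rw [fockNorm_sq]
    exact (ENNReal.ofReal_le_iff_le_toReal hg.2.ne).1 (ofReal_mul_exp_le_fockNormSq hg.1 w)
  have hsq : ‖g w‖ ^ 2 ≤ Real.exp (π * (‖z‖ + R + 1) ^ 2) / π * fockNorm g ^ 2 := by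
    rw [div_mul_eq_mul_div, le_div_iff₀ Real.pi_pos]
    calc ‖g w‖ ^ 2 * π
        = π * ‖g w‖ ^ 2 * Real.exp (-π * (‖w‖ + 1) ^ 2) * Real.exp (π * (‖w‖ + 1) ^ 2) := by
          rw [mul_assoc _ (Real.exp _), ← Real.exp_add, neg_mul, neg_add_cancel, Real.exp_zero]
          ring
      _ ≤ fockNorm g ^ 2 * Real.exp (π * (‖z‖ + R + 1) ^ 2) := by
          gcongr
      _ = _ := mul_comm _ _
  rw [← pow_le_pow_iff_left₀ (norm_nonneg _)
    (mul_nonneg (Real.sqrt_nonneg _) (fockNorm_nonneg g)) two_ne_zero, mul_pow,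
    Real.sq_sqrt (by positivity)]
  exact hsq

theorem lintegral_ball_enorm_inv_sub (z : ℂ) (R : ℝ) :
    ∫⁻ ζ in ball z R, ‖(z - ζ)⁻¹‖ₑ = ENNReal.ofReal (2 * π * R) := by
  have hcircle : ∀ r ∈ Ioo 0 R,
      ENNReal.ofReal r * ∫⁻ θ in Ioo (-π) π, ‖(z - circleMap z r θ)⁻¹‖ₑ =
        ENNReal.ofReal (2 * π) := fun r hr => by
    have hnorm : ∀ θ, ‖(z - circleMap z r θ)⁻¹‖ₑ = ENNReal.ofReal r⁻¹ := fun θ => by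
      rw [← ofReal_norm, norm_inv, ← norm_neg, neg_sub, circleMap_sub_center,
        norm_circleMap_zero, abs_of_pos hr.1]
    simp only [hnorm, setLIntegral_const, Real.volume_Ioo]
    rw [← mul_assoc, ← ENNReal.ofReal_mul hr.1.le, mul_inv_cancel₀ hr.1.ne', ENNReal.ofReal_one,
      one_mul]
    ring_nf
  rw [lintegral_ball_eq_lintegral_circleMap (f := fun ζ => ‖(z - ζ)⁻¹‖ₑ) (by fun_prop),
    setLIntegral_congr_fun measurableSet_Ioo hcircle, setLIntegral_const, Real.volume_Ioo,
    ← ENNReal.ofReal_mul Real.two_pi_pos.le, sub_zero]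

theorem lintegral_norm_mul_norm_mul_exp_le {g v : ℂ → ℂ} (hg : AEMeasurable g)
    (hv : AEMeasurable v) :
    ∫⁻ ζ, ENNReal.ofReal (‖g ζ‖ * ‖v ζ‖ * Real.exp (-π * ‖ζ‖ ^ 2)) ≤
      fockNormSq g ^ (1 / 2 : ℝ) * fockNormSq v ^ (1 / 2 : ℝ) := by
  set ω : ℂ → ℝ := fun ζ => √(Real.exp (-π * ‖ζ‖ ^ 2))
  have hω : AEMeasurable ω := by fun_prop
  have hsq : ∀ (f : ℂ → ℂ) ζ, ENNReal.ofReal (‖f ζ‖ * ω ζ) ^ (2 : ℝ) =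
      ENNReal.ofReal (‖f ζ‖ ^ 2 * Real.exp (-π * ‖ζ‖ ^ 2)) := fun f ζ => by
    rw [ENNReal.rpow_two, ← ENNReal.ofReal_pow (by positivity), mul_pow,
      Real.sq_sqrt (Real.exp_pos _).le]
  have hsplit : ∀ ζ, ENNReal.ofReal (‖g ζ‖ * ‖v ζ‖ * Real.exp (-π * ‖ζ‖ ^ 2)) =
      ENNReal.ofReal (‖g ζ‖ * ω ζ) * ENNReal.ofReal (‖v ζ‖ * ω ζ) := fun ζ => by
    rw [← ENNReal.ofReal_mul (by positivity), mul_mul_mul_comm,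
      Real.mul_self_sqrt (Real.exp_pos _).le]
  simp only [hsplit]
  refine (ENNReal.lintegral_mul_le_Lp_mul_Lq volume Real.HolderConjugate.two_two
    (hg.norm.mul hω).ennreal_ofReal (hv.norm.mul hω).ennreal_ofReal).trans_eq ?_
  simp only [Pi.mul_apply, hsq, fockNormSq]

noncomputable def fockCauchyIntegrand (g v : ℂ → ℂ) (z ζ : ℂ) : ℂ :=
  g ζ * conj (v ζ) / (z - ζ) * (Real.exp (-π * ‖ζ‖ ^ 2) : ℂ)

noncomputable def fockCauchy (g v : ℂ → ℂ) (z : ℂ) : ℂ :=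
  ∫ ζ, fockCauchyIntegrand g v z ζ

theorem norm_fockCauchyIntegrand (g v : ℂ → ℂ) (z ζ : ℂ) :
    ‖fockCauchyIntegrand g v z ζ‖ =
      ‖g ζ‖ * ‖v ζ‖ * Real.exp (-π * ‖ζ‖ ^ 2) * ‖(z - ζ)⁻¹‖ := by
  rw [fockCauchyIntegrand, norm_mul, norm_div, norm_mul, Complex.norm_conj, Complex.norm_real,
    Real.norm_of_nonneg (Real.exp_pos _).le, norm_inv]
  ring

theorem enorm_fockCauchyIntegrand_le {g v : ℂ → ℂ} {z : ℂ} {K : ℝ}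
    (hK : ∀ ζ ∈ ball z 1, ‖g ζ‖ * ‖v ζ‖ ≤ K) (ζ : ℂ) :
    ‖fockCauchyIntegrand g v z ζ‖ₑ ≤
      (ball z 1).indicator (fun ζ => ENNReal.ofReal K * ‖(z - ζ)⁻¹‖ₑ) ζ +
        ENNReal.ofReal (‖g ζ‖ * ‖v ζ‖ * Real.exp (-π * ‖ζ‖ ^ 2)) := by
  rw [← ofReal_norm, norm_fockCauchyIntegrand]
  by_cases hζ : ζ ∈ ball z 1
  · have hexp : Real.exp (-π * ‖ζ‖ ^ 2) ≤ 1 :=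
      Real.exp_le_one_iff.2 (by nlinarith [Real.pi_pos, sq_nonneg ‖ζ‖])
    have hK0 : 0 ≤ K := (by positivity : 0 ≤ ‖g ζ‖ * ‖v ζ‖).trans (hK ζ hζ)
    rw [indicator_of_mem hζ, ← ofReal_norm, ← ENNReal.ofReal_mul hK0]
    refine le_add_right (ENNReal.ofReal_le_ofReal ?_)
    calc ‖g ζ‖ * ‖v ζ‖ * Real.exp (-π * ‖ζ‖ ^ 2) * ‖(z - ζ)⁻¹‖
        ≤ ‖g ζ‖ * ‖v ζ‖ * 1 * ‖(z - ζ)⁻¹‖ := by gcongr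
      _ ≤ K * ‖(z - ζ)⁻¹‖ := by rw [mul_one]; gcongr; exact hK ζ hζ
  · have hfar : ‖(z - ζ)⁻¹‖ ≤ 1 := by
      rw [norm_inv]
      exact inv_le_one_of_one_le₀ (by simpa [dist_eq_norm, norm_sub_rev] using hζ)
    rw [indicator_of_notMem hζ, zero_add]
    exact ENNReal.ofReal_le_ofReal (mul_le_of_le_one_right (by positivity) hfar)

theorem exists_lintegral_fockCauchyIntegrand_le (z : ℂ) :
    ∃ C ≥ 0, ∀ g v, MemFock g → MemFock v →
      ∫⁻ ζ, ‖fockCauchyIntegrand g v z ζ‖ₑ ≤ ENNReal.ofReal (C * fockNorm g * fockNorm v) := by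
  obtain ⟨M, hM⟩ := exists_norm_le_mul_fockNorm z 1
  refine ⟨2 * π * M ^ 2 + 1, by positivity, fun g v hg hv => ?_⟩
  have hgv : 0 ≤ fockNorm g * fockNorm v := mul_nonneg (fockNorm_nonneg g) (fockNorm_nonneg v)
  set A := ENNReal.ofReal (M ^ 2 * (fockNorm g * fockNorm v))
  have hnear : ∀ ζ ∈ ball z 1, ‖g ζ‖ * ‖v ζ‖ ≤ M ^ 2 * (fockNorm g * fockNorm v) := by
    intro ζ hζ
    have hgζ := hM g hg ζ (ball_subset_closedBall hζ)
    calc ‖g ζ‖ * ‖v ζ‖ ≤ M * fockNorm g * (M * fockNorm v) :=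
          mul_le_mul hgζ (hM v hv ζ (ball_subset_closedBall hζ)) (norm_nonneg _)
            ((norm_nonneg _).trans hgζ)
      _ = M ^ 2 * (fockNorm g * fockNorm v) := by ring
  have hCS := lintegral_norm_mul_norm_mul_exp_le hg.1.continuous.aemeasurable
    hv.1.continuous.aemeasurable
  rw [← ofReal_fockNorm hg.2.ne, ← ofReal_fockNorm hv.2.ne,
    ← ENNReal.ofReal_mul (fockNorm_nonneg g)] at hCS
  calc ∫⁻ ζ, ‖fockCauchyIntegrand g v z ζ‖ₑ
      ≤ ∫⁻ ζ, ((ball z 1).indicator (fun ζ => A * ‖(z - ζ)⁻¹‖ₑ) ζ +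
          ENNReal.ofReal (‖g ζ‖ * ‖v ζ‖ * Real.exp (-π * ‖ζ‖ ^ 2))) :=
        lintegral_mono (enorm_fockCauchyIntegrand_le hnear)
    _ = A * ENNReal.ofReal (2 * π * 1) +
          ∫⁻ ζ, ENNReal.ofReal (‖g ζ‖ * ‖v ζ‖ * Real.exp (-π * ‖ζ‖ ^ 2)) := by
        rw [lintegral_add_left ((by fun_prop : Measurable fun ζ => A * ‖(z - ζ)⁻¹‖ₑ).indicator
          measurableSet_ball), lintegral_indicator measurableSet_ball,
          lintegral_const_mul _ (by fun_prop), lintegral_ball_enorm_inv_sub]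
    _ ≤ A * ENNReal.ofReal (2 * π * 1) + ENNReal.ofReal (fockNorm g * fockNorm v) := by
        gcongr
    _ = ENNReal.ofReal ((2 * π * M ^ 2 + 1) * fockNorm g * fockNorm v) := by
        rw [← ENNReal.ofReal_mul (by positivity), ← ENNReal.ofReal_add (by positivity) hgv]
        ring_nf

theorem MemFock.integrable_fockCauchyIntegrand {g v : ℂ → ℂ} (hg : MemFock g) (hv : MemFock v)
    (z : ℂ) : Integrable (fockCauchyIntegrand g v z) := by
  obtain ⟨C, -, hC⟩ := exists_lintegral_fockCauchyIntegrand_le z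
  have hgm := hg.1.continuous.measurable
  have hvm := hv.1.continuous.measurable
  have hmeas : Measurable (fockCauchyIntegrand g v z) := by
    unfold fockCauchyIntegrand; fun_prop
  exact ⟨hmeas.aestronglyMeasurable, (hC g v hg hv).trans_lt ENNReal.ofReal_lt_top⟩

theorem exists_norm_fockCauchy_le (z : ℂ) :
    ∃ C, ∀ g v, MemFock g → MemFock v → ‖fockCauchy g v z‖ ≤ C * fockNorm g * fockNorm v := by
  obtain ⟨C, hC0, hC⟩ := exists_lintegral_fockCauchyIntegrand_le z
  refine ⟨C, fun g v hg hv => ?_⟩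
  have hbound := (enorm_integral_le_lintegral_enorm _).trans (hC g v hg hv)
  rw [← ofReal_norm] at hbound
  have hgv := mul_nonneg (mul_nonneg hC0 (fockNorm_nonneg g)) (fockNorm_nonneg v)
  exact (ENNReal.ofReal_le_ofReal_iff hgv).1 hbound

theorem fockCauchy_sub {g₁ g₂ v : ℂ → ℂ} (h₁ : MemFock g₁) (h₂ : MemFock g₂) (hv : MemFock v)
    (z : ℂ) : fockCauchy (fun ζ => g₁ ζ - g₂ ζ) v z = fockCauchy g₁ v z - fockCauchy g₂ v z := by
  rw [fockCauchy, fockCauchy, fockCauchy, ← integral_sub (h₁.integrable_fockCauchyIntegrand hv z)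
    (h₂.integrable_fockCauchyIntegrand hv z)]
  congr 1 with ζ
  simp only [fockCauchyIntegrand]
  ring

theorem tendsto_fockCauchy {ι : Type*} {l : Filter ι} {g : ι → ℂ → ℂ} {g₀ v : ℂ → ℂ}
    (hg : ∀ i, MemFock (g i)) (hg₀ : MemFock g₀) (hv : MemFock v)
    (hsub : ∀ i, MemFock fun ζ => g i ζ - g₀ ζ)
    (hlim : Tendsto (fun i => fockNorm fun ζ => g i ζ - g₀ ζ) l (𝓝 0)) (z : ℂ) :
    Tendsto (fun i => fockCauchy (g i) v z) l (𝓝 (fockCauchy g₀ v z)) := by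
  obtain ⟨C, hC⟩ := exists_norm_fockCauchy_le z
  rw [tendsto_iff_norm_sub_tendsto_zero]
  refine squeeze_zero (fun i => norm_nonneg _) (fun i => ?_)
    (by simpa using (hlim.const_mul C).mul_const (fockNorm v))
  rw [← fockCauchy_sub (hg i) hg₀ hv]
  exact hC _ v (hsub i) hv

theorem fockCauchy_polynomial_mul {F v : ℂ → ℂ} (hF : MemFock0 F) (hv : MemFock v)
    (horth : ∀ p : Polynomial ℂ, fockInner (fun ζ => p.eval ζ * F ζ) v = 0)
    (p : Polynomial ℂ) (z : ℂ) :
    fockCauchy (fun ζ => p.eval ζ * F ζ) v z = p.eval z * fockCauchy F v z := by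
  obtain ⟨q, hq⟩ := Polynomial.X_sub_C_dvd_sub_C_eval (a := z) (p := p)
  have hdiv : ∀ ζ, p.eval ζ - p.eval z = (ζ - z) * q.eval ζ := fun ζ => by
    simpa using congrArg (Polynomial.eval ζ) hq
  have hF1 : MemFock F := by simpa using hF.2 1
  have hae : (fun ζ => q.eval ζ * F ζ * conj (v ζ) * (Real.exp (-π * ‖ζ‖ ^ 2) : ℂ)) =ᵐ[volume]
      fun ζ => p.eval z * fockCauchyIntegrand F v z ζ -
        fockCauchyIntegrand (fun ζ => p.eval ζ * F ζ) v z ζ := by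
    filter_upwards [Measure.ae_ne volume z] with ζ hζ
    have hzζ : z - ζ ≠ 0 := sub_ne_zero.2 (Ne.symm hζ)
    rw [fockCauchyIntegrand, fockCauchyIntegrand,
      show p.eval ζ = p.eval z + (ζ - z) * q.eval ζ by linear_combination hdiv ζ]
    field_simp
    ring
  have h := horth q
  rw [fockInner, integral_congr_ae hae, integral_sub
    ((hF1.integrable_fockCauchyIntegrand hv z).const_mul _)
    ((hF.2 p).integrable_fockCauchyIntegrand hv z), integral_const_mul, sub_eq_zero] at h
  exact h.symm

theorem exists_sphere_forall_ne_zero {F : ℂ → ℂ} (hF : Differentiable ℂ F) {w : ℂ} (hw : F w ≠ 0)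
    (z : ℂ) {R : ℝ} (hR : 0 < R) : ∃ r ∈ Ioo 0 R, ∀ ζ ∈ sphere z r, F ζ ≠ 0 := by
  have hcodiscrete : F ⁻¹' {0}ᶜ ∈ codiscreteWithin (closedBall z R) :=
    codiscreteWithin_mono (subset_univ _)
      ((analyticOnNhd_univ_iff_differentiable.2 hF).preimage_zero_mem_codiscrete hw)
  have hzeros := (isCompact_closedBall z R).finite_sdiff_of_mem_codiscreteWithin hcodiscrete
  obtain ⟨r, hr, hr_notMem⟩ := (Ioo_infinite hR).exists_notMem_finite (hzeros.image (dist · z))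
  refine ⟨r, hr, fun ζ hζ hFζ => hr_notMem ⟨ζ, ⟨?_, by simpa using hFζ⟩, mem_sphere.1 hζ⟩⟩
  exact sphere_subset_closedBall.trans (closedBall_subset_closedBall hr.2.le) hζ

theorem exists_norm_le_mul_fockNorm_mul {F : ℂ → ℂ} (hF : Differentiable ℂ F) {w : ℂ}
    (hw : F w ≠ 0) (z : ℂ) :
    ∃ C, ∀ h : ℂ → ℂ, Differentiable ℂ h → MemFock (fun ζ => h ζ * F ζ) →
      ‖h z‖ ≤ C * fockNorm fun ζ => h ζ * F ζ := by
  obtain ⟨r, hr, hsphere⟩ := exists_sphere_forall_ne_zero hF hw z one_pos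
  obtain ⟨ζ₀, hζ₀, hmin⟩ := (isCompact_sphere z r).exists_isMinOn
    (NormedSpace.sphere_nonempty.2 hr.1.le) hF.continuous.norm.continuousOn
  have hm : 0 < ‖F ζ₀‖ := norm_pos_iff.2 (hsphere ζ₀ hζ₀)
  obtain ⟨M, hM⟩ := exists_norm_le_mul_fockNorm z 1
  refine ⟨M / ‖F ζ₀‖, fun h hh hhF => ?_⟩
  have hbound : ∀ ζ ∈ frontier (ball z r), ‖h ζ‖ ≤ M / ‖F ζ₀‖ * fockNorm fun ζ => h ζ * F ζ := by
    intro ζ hζ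
    rw [frontier_ball z hr.1.ne'] at hζ
    rw [div_mul_eq_mul_div, le_div_iff₀ hm]
    calc ‖h ζ‖ * ‖F ζ₀‖ ≤ ‖h ζ * F ζ‖ := by rw [norm_mul]; gcongr; exact hmin hζ
      _ ≤ _ := hM _ hhF ζ (sphere_subset_closedBall.trans (closedBall_subset_closedBall hr.2.le) hζ)
  exact Complex.norm_le_of_forall_mem_frontier_norm_le isBounded_ball hh.diffContOnCl hbound
    (subset_closure (mem_ball_self hr.1))

theorem tendsto_eval_of_tendsto_fockNorm {ι : Type*} {l : Filter ι} {F H : ℂ → ℂ}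
    {q : ι → ℂ → ℂ} (hF : Differentiable ℂ F) {w : ℂ} (hw : F w ≠ 0) (hH : Differentiable ℂ H)
    (hq : ∀ i, Differentiable ℂ (q i)) (hmem : ∀ i, MemFock fun ζ => q i ζ * F ζ - F ζ * H ζ)
    (hlim : Tendsto (fun i => fockNorm fun ζ => q i ζ * F ζ - F ζ * H ζ) l (𝓝 0)) (z : ℂ) :
    Tendsto (fun i => q i z) l (𝓝 (H z)) := by
  obtain ⟨C, hC⟩ := exists_norm_le_mul_fockNorm_mul hF hw z
  rw [tendsto_iff_norm_sub_tendsto_zero]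
  refine squeeze_zero (fun i => norm_nonneg _) (fun i => ?_) (by simpa using hlim.const_mul C)
  have hfactor : (fun ζ => (q i ζ - H ζ) * F ζ) = fun ζ => q i ζ * F ζ - F ζ * H ζ := by
    ext ζ; ring
  have := hC (fun ζ => q i ζ - H ζ) ((hq i).sub hH) (hfactor ▸ hmem i)
  rwa [hfactor] at this

theorem InPolyClosure.exists_tendsto_fockNorm {F G : ℂ → ℂ} (h : InPolyClosure F G)
    (hF : Differentiable ℂ F) :
    ∃ p : ℕ → Polynomial ℂ, (∀ n, MemFock fun ζ => (p n).eval ζ * F ζ - G ζ) ∧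
      Tendsto (fun n => fockNorm fun ζ => (p n).eval ζ * F ζ - G ζ) atTop (𝓝 0) := by
  choose p hp using fun n : ℕ => h.2 (1 / (n + 1)) Nat.one_div_pos_of_nat
  refine ⟨p, fun n => ⟨((p n).differentiable.mul hF).sub h.1.1,
    (hp n).trans ENNReal.ofReal_lt_top⟩, ?_⟩
  exact squeeze_zero (fun n => fockNorm_nonneg _)
    (fun n => (fockNorm_lt_of_fockNormSq_lt Nat.one_div_pos_of_nat (hp n)).le)
    tendsto_one_div_add_atTop_nhds_zero_nat

theorem orthogonality_integral_identity_general (F H W : ℂ → ℂ) (hF : MemFock0 F)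
    (hH2 : MemE2' H)
    (hFH : InPolyClosure F (fun z => F z * H z))
    (hFW : MemFock fun z => F z * W z)
    (horth : ∀ p : Polynomial ℂ,
      fockInner (fun z => p.eval z * F z) (fun z => F z * W z) = 0) :
    ∀ z : ℂ,
      H z * ∫ ζ : ℂ, F ζ * (starRingEnd ℂ) (F ζ * W ζ) / (z - ζ) *
          (Real.exp (-Real.pi * ‖ζ‖ ^ 2) : ℝ)
      = ∫ ζ : ℂ, F ζ * H ζ * (starRingEnd ℂ) (F ζ * W ζ) / (z - ζ) *
          (Real.exp (-Real.pi * ‖ζ‖ ^ 2) : ℝ) := by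
  intro z
  by_cases hF0 : ∀ ζ, F ζ = 0
  · simp [hF0]
  obtain ⟨w, hw⟩ := not_forall.1 hF0
  obtain ⟨-, hH, -⟩ := hH2
  obtain ⟨p, hpF, hlim⟩ := hFH.exists_tendsto_fockNorm hF.1
  have hvalue : Tendsto (fun n => (p n).eval z) atTop (𝓝 (H z)) :=
    tendsto_eval_of_tendsto_fockNorm hF.1 hw hH (fun n => (p n).differentiable) hpF hlim z
  have hcauchy := tendsto_fockCauchy (fun n => hF.2 (p n)) hFH.1 hFW hpF hlim z
  show H z * fockCauchy F _ z = fockCauchy _ _ z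
  refine tendsto_nhds_unique ?_ hcauchy
  simpa only [fockCauchy_polynomial_mul hF hFW horth] using hvalue.mul_const (fockCauchy F _ z)

theorem orthogonality_integral_identity (F H W : ℂ → ℂ) (hF : MemFock0 F)
    (hH2 : MemE2' H) (hHcrg : CRG H)
    (hind : ∃ c : ℝ, 0 < c ∧ ∀ θ ∈ Set.Icc (0 : ℝ) (2 * Real.pi), c ≤ indicator2 H θ)
    (hsimple : ∀ z : ℂ, H z = 0 → deriv H z ≠ 0)
    (hdisj : ∀ z : ℂ, ¬(F z = 0 ∧ H z = 0))
    (hFH : InPolyClosure F (fun z => F z * H z))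
    (hW : Differentiable ℂ W) (hFW : MemFock fun z => F z * W z)
    (horth : ∀ p : Polynomial ℂ,
      fockInner (fun z => p.eval z * F z) (fun z => F z * W z) = 0) :
    ∀ z : ℂ,
      H z * ∫ ζ : ℂ, F ζ * (starRingEnd ℂ) (F ζ * W ζ) / (z - ζ) *
          (Real.exp (-Real.pi * ‖ζ‖ ^ 2) : ℝ)
      = ∫ ζ : ℂ, F ζ * H ζ * (starRingEnd ℂ) (F ζ * W ζ) / (z - ζ) *
          (Real.exp (-Real.pi * ‖ζ‖ ^ 2) : ℝ) :=
  orthogonality_integral_identity_general F H W hF hH2 hFH hFW horth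
end
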